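/- arXiv:math/0606066 — 4 statements merged into one kernel-verified Lean document; each statement's English description precedes it below -/
import Mathlib

section
/- For all matrices f, g in SL(2,ℂ), the Fricke trace identity holds: tr(f g f⁻¹ g⁻¹) = (tr f)² + (tr g)² + (tr(fg))² − (tr f)(tr g)(tr(fg)) − 2. -/
open Matrix

theorem fricke_trace_identity (f g : Matrix.SpecialLinearGroup (Fin 2) ℂ) :
    Matrix.trace ((f * g * f⁻¹ * g⁻¹ : Matrix.SpecialLinearGroup (Fin 2) ℂ) :
        Matrix (Fin 2) (Fin 2) ℂ) =
      (Matrix.trace (f : Matrix (Fin 2) (Fin 2) ℂ))^2 +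
      (Matrix.trace (g : Matrix (Fin 2) (Fin 2) ℂ))^2 +
      (Matrix.trace ((f * g : Matrix.SpecialLinearGroup (Fin 2) ℂ) :
          Matrix (Fin 2) (Fin 2) ℂ))^2 -
      (Matrix.trace (f : Matrix (Fin 2) (Fin 2) ℂ)) *
        (Matrix.trace (g : Matrix (Fin 2) (Fin 2) ℂ)) *
        (Matrix.trace ((f * g : Matrix.SpecialLinearGroup (Fin 2) ℂ) :
            Matrix (Fin 2) (Fin 2) ℂ)) - 2 := by
  have hf := f.2
  have hg := g.2
  simp only [Matrix.det_fin_two] at hf hg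
  simp only [Matrix.SpecialLinearGroup.coe_mul,
    Matrix.SpecialLinearGroup.coe_inv, Matrix.coe_units_inv]
  rw [Matrix.adjugate_fin_two, Matrix.adjugate_fin_two]
  simp [Matrix.trace_fin_two, Matrix.mul_apply, Fin.sum_univ_two]
  set fa := (f : Matrix (Fin 2) (Fin 2) ℂ) 0 0
  set fb := (f : Matrix (Fin 2) (Fin 2) ℂ) 0 1
  set fc := (f : Matrix (Fin 2) (Fin 2) ℂ) 1 0
  set fd := (f : Matrix (Fin 2) (Fin 2) ℂ) 1 1
  set ga := (g : Matrix (Fin 2) (Fin 2) ℂ) 0 0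
  set gb := (g : Matrix (Fin 2) (Fin 2) ℂ) 0 1
  set gc := (g : Matrix (Fin 2) (Fin 2) ℂ) 1 0
  set gd := (g : Matrix (Fin 2) (Fin 2) ℂ) 1 1
  linear_combination (2*ga*gd + ga^2 + gd^2 - 2) * hf +
    (fa^2 + fd^2 + 2*fb*fc) * hg
end

section
/- For all f, g in SL(2,ℂ), tr([f², g]) − 2 = (tr f)² · (tr([f, g]) − 2), where [a,b] = a b a⁻¹ b⁻¹. -/
open Matrix

theorem gamma_sq_power_two (f g : Matrix.SpecialLinearGroup (Fin 2) ℂ) :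
    Matrix.trace ((f^2 * g * (f^2)⁻¹ * g⁻¹ : Matrix.SpecialLinearGroup (Fin 2) ℂ) :
        Matrix (Fin 2) (Fin 2) ℂ) - 2 =
      (Matrix.trace (f : Matrix (Fin 2) (Fin 2) ℂ))^2 *
        (Matrix.trace ((f * g * f⁻¹ * g⁻¹ : Matrix.SpecialLinearGroup (Fin 2) ℂ) :
            Matrix (Fin 2) (Fin 2) ℂ) - 2) := by
  have hf : Matrix.det (f : Matrix (Fin 2) (Fin 2) ℂ) = 1 := f.2
  have hg : Matrix.det (g : Matrix (Fin 2) (Fin 2) ℂ) = 1 := g.2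
  rw [Matrix.det_fin_two] at hf hg
  simp only [Matrix.SpecialLinearGroup.coe_mul, Matrix.SpecialLinearGroup.coe_inv,
    Matrix.SpecialLinearGroup.coe_pow, pow_two, Matrix.adjugate_fin_two,
    Matrix.trace_fin_two, Matrix.mul_apply, Fin.sum_univ_two]
  simp only [Matrix.of_apply, Matrix.cons_val', Matrix.cons_val_zero, Matrix.cons_val_one,
    Matrix.head_cons, Matrix.empty_val', Matrix.cons_val_fin_one, Matrix.head_fin_const]
  linear_combination ((-2*(f 1 1)*(f 1 1)*(g 0 0)*(g 1 1) + 4 + 2*(f 1 1)*(f 1 1)*(g 0 1)*(g 1 0) + -2*(f 0 0)*(f 1 1)*(g 0 0)*(g 1 1) + 2*(f 0 0)*(f 1 1)*(g 0 1)*(g 1 0) + -2*(f 0 0)*(f 0 0)*(g 0 0)*(g 1 1) + 2*(f 0 0)*(f 0 0)*(g 0 1)*(g 1 0) + -2*(f 0 1)*(f 1 0)*(g 0 0)*(g 1 1) + -2*(g 0 0)*(g 1 1) + 2*(f 0 1)*(f 1 0)*(g 0 1)*(g 1 0)+ 2*(g 0 1)*(g 1 0)) : ℂ) * hf + ((-2*(f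 1 1)*(f 1 1) + -2*(f 0 0)*(f 0 0) + -4*(f 0 1)*(f 1 0) + -2) : ℂ) * hg
end

section
/- For all f, g in SL(2,ℂ), (tr([f³, g]) − 2) = ((tr f)² − 1)² · (tr([f, g]) − 2), where [a,b] = a b a⁻¹ b⁻¹. -/
set_option maxHeartbeats 1000000
set_option maxRecDepth 10000

open Matrix

private lemma entry_simp : True := trivial

private lemma fricke (A B : Matrix (Fin 2) (Fin 2) ℂ) (hA : A.det = 1) (hB : B.det = 1) :
    Matrix.trace (A * B * A.adjugate * B.adjugate) =
      (Matrix.trace A)^2 + (Matrix.trace B)^2 + (Matrix.trace (A * B))^2 -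
        Matrix.trace A * Matrix.trace B * Matrix.trace (A * B) - 2 := by
  rw [Matrix.det_fin_two] at hA hB
  simp only [Matrix.adjugate_fin_two, Matrix.trace_fin_two, Matrix.mul_apply,
    Fin.sum_univ_two, Matrix.of_apply, Matrix.cons_val', Matrix.cons_val_zero, Matrix.cons_val_one,
    Matrix.head_cons, Matrix.empty_val', Matrix.cons_val_fin_one, Matrix.head_fin_const]
  linear_combination (-(2:ℂ) + B 1 1 ^ 2 + (2:ℂ) * B 0 0 * B 1 1 + B 0 0 ^ 2) * hA +
    (A 1 1 ^ 2 + (2:ℂ) * A 0 1 * A 1 0 + A 0 0 ^ 2) * hB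

private lemma tr_cube (A : Matrix (Fin 2) (Fin 2) ℂ) (hA : A.det = 1) :
    Matrix.trace (A * A * A) = (Matrix.trace A)^3 - 3 * Matrix.trace A := by
  rw [Matrix.det_fin_two] at hA
  simp only [Matrix.trace_fin_two, Matrix.mul_apply, Fin.sum_univ_two]
  linear_combination (-(3:ℂ) * A 1 1 - (3:ℂ) * A 0 0) * hA

private lemma tr_cube_mul (A B : Matrix (Fin 2) (Fin 2) ℂ) (hA : A.det = 1) :
    Matrix.trace (A * A * A * B) =
      ((Matrix.trace A)^2 - 1) * Matrix.trace (A * B) -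
        Matrix.trace A * Matrix.trace B := by
  rw [Matrix.det_fin_two] at hA
  simp only [Matrix.trace_fin_two, Matrix.mul_apply, Fin.sum_univ_two]
  linear_combination (-(2:ℂ) * A 1 1 * B 1 1 - A 1 1 * B 0 0 - A 1 0 * B 0 1 -
    A 0 1 * B 1 0 - A 0 0 * B 1 1 - (2:ℂ) * A 0 0 * B 0 0) * hA

theorem gamma_sq_power_three (f g : Matrix.SpecialLinearGroup (Fin 2) ℂ) :
    Matrix.trace ((f^3 * g * (f^3)⁻¹ * g⁻¹ : Matrix.SpecialLinearGroup (Fin 2) ℂ) :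
        Matrix (Fin 2) (Fin 2) ℂ) - 2 =
      ((Matrix.trace (f : Matrix (Fin 2) (Fin 2) ℂ))^2 - 1)^2 *
        (Matrix.trace ((f * g * f⁻¹ * g⁻¹ : Matrix.SpecialLinearGroup (Fin 2) ℂ) :
            Matrix (Fin 2) (Fin 2) ℂ) - 2) := by
  set A : Matrix (Fin 2) (Fin 2) ℂ := (f : Matrix (Fin 2) (Fin 2) ℂ) with hAdef
  set B : Matrix (Fin 2) (Fin 2) ℂ := (g : Matrix (Fin 2) (Fin 2) ℂ) with hBdef
  have hA : A.det = 1 := f.2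
  have hB : B.det = 1 := g.2
  have hpow : ((f^3 : Matrix.SpecialLinearGroup (Fin 2) ℂ) : Matrix (Fin 2) (Fin 2) ℂ)
      = A * A * A := by
    rw [Matrix.SpecialLinearGroup.coe_pow]
    rw [pow_succ, pow_succ, pow_one]
  have hA3 : (A * A * A).det = 1 := by
    rw [Matrix.det_mul, Matrix.det_mul, hA]; ring
  have h1 : ((f^3 * g * (f^3)⁻¹ * g⁻¹ : Matrix.SpecialLinearGroup (Fin 2) ℂ) :
      Matrix (Fin 2) (Fin 2) ℂ) = (A * A * A) * B * (A * A * A).adjugate * B.adjugate := by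
    simp only [Matrix.SpecialLinearGroup.coe_mul, Matrix.SpecialLinearGroup.coe_inv, hpow,
      hBdef]
  have h2 : ((f * g * f⁻¹ * g⁻¹ : Matrix.SpecialLinearGroup (Fin 2) ℂ) :
      Matrix (Fin 2) (Fin 2) ℂ) = A * B * A.adjugate * B.adjugate := by
    simp only [Matrix.SpecialLinearGroup.coe_mul, Matrix.SpecialLinearGroup.coe_inv, hAdef,
      hBdef]
  rw [h1, h2, fricke (A * A * A) B hA3 hB, fricke A B hA hB, tr_cube A hA,
    mul_assoc A A A]
  rw [← mul_assoc A A A, tr_cube_mul A B hA]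
  ring
end

section
/- Let G be a group, e, f, g ∈ G with e² = 1, e f e = f⁻¹, e g e = g⁻¹, and suppose (g f e)^p = 1 for some odd positive integer p. Then e = f⁻¹ g⁻¹ (f g f⁻¹ g⁻¹)^((p−1)/2); in particular e lies in the subgroup generated by f and g. -/
theorem e_in_closure_of_odd_relation {G : Type*} [Group G] (e f g : G)
    (he : e^2 = 1) (hf : e * f * e = f⁻¹) (hg : e * g * e = g⁻¹)
    (p : ℕ) (hp : Odd p) (hp0 : 0 < p) (hrel : (g * f * e)^p = 1) :
    e = f⁻¹ * g⁻¹ * (f * g * f⁻¹ * g⁻¹)^((p - 1) / 2) ∧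
      e ∈ Subgroup.closure {f, g} := by
  obtain ⟨k, hk⟩ := hp
  have hee : e * e = 1 := by rw [← sq]; exact he
  have hef : e * f = f⁻¹ * e := by
    have := hf
    calc e * f = e * f * e * e := by rw [mul_assoc, hee, mul_one]
    _ = f⁻¹ * e := by rw [hf]
  have heg : e * g = g⁻¹ * e := by
    calc e * g = e * g * e * e := by rw [mul_assoc, hee, mul_one]
    _ = g⁻¹ * e := by rw [hg]
  have h2 : (g * f * e)^2 = g * f * g⁻¹ * f⁻¹ := by
    rw [sq]
    calc g * f * e * (g * f * e) = g * f * (e * g) * (f * e) := by group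
    _ = g * f * g⁻¹ * (e * f) * e := by rw [heg]; group
    _ = g * f * g⁻¹ * f⁻¹ * (e * e) := by rw [hef]; group
    _ = g * f * g⁻¹ * f⁻¹ := by rw [hee, mul_one]
  have hkk : (p - 1) / 2 = k := by omega
  have hpe : (g * f * e)^p = (g * f * g⁻¹ * f⁻¹)^k * (g * f * e) := by
    rw [hk, pow_add, pow_mul, h2, pow_one]
  rw [hpe] at hrel
  have heq : e = f⁻¹ * g⁻¹ * ((g * f * g⁻¹ * f⁻¹)^k)⁻¹ := by
    have : (g * f * g⁻¹ * f⁻¹)^k * (g * f) * e = 1 := by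
      rw [← hrel]; group
    rw [mul_eq_one_iff_eq_inv] at this
    rw [← inv_inv e, ← this]; group
  have hinv : ((g * f * g⁻¹ * f⁻¹)^k)⁻¹ = (f * g * f⁻¹ * g⁻¹)^k := by
    rw [← inv_pow]; congr 1; group
  rw [hinv] at heq
  have h1 : e = f⁻¹ * g⁻¹ * (f * g * f⁻¹ * g⁻¹)^((p - 1) / 2) := by
    rw [hkk]; exact heq
  refine ⟨h1, ?_⟩
  have hfm : f ∈ Subgroup.closure {f, g} :=
    Subgroup.subset_closure (by simp)
  have hgm : g ∈ Subgroup.closure {f, g} :=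
    Subgroup.subset_closure (by simp)
  rw [h1]
  exact mul_mem (mul_mem (inv_mem hfm) (inv_mem hgm))
    (pow_mem (mul_mem (mul_mem (mul_mem hfm hgm) (inv_mem hfm)) (inv_mem hgm)) _)
end
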